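/- arXiv:2107.05487 — 2 statements merged into one kernel-verified Lean document; each statement's English description precedes it below -/
import Mathlib

section
/- Consider the warped product metric g = dr² + F'(r)² ḡ on ℝ × N^{n−1}, where F : ℝ → ℝ is smooth with F' > 0 and (N, ḡ) has scalar curvature R̄. Suppose the scalar curvature R of g is nonnegative everywhere and R̄ ≤ 0 everywhere. Then R ≡ 0, R̄ ≡ 0, F' is constant, and g is the Riemannian product metric dr² + c² ḡ for some constant c > 0. -/
/-!
The curvature formula with `R ≥ 0` and `R̄ ≤ 0` forces `F''' ≤ 0`, so `F'` is concave on all of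
`ℝ`; being also positive, hence bounded below, it must be constant. With `F'' = F''' = 0` the
formula reduces to `R = c⁻² R̄`, and the opposite signs of `R` and `R̄` give `R = R̄ = 0`.
-/

open Set

theorem ConcaveOn.monotone_of_bddBelow {f : ℝ → ℝ} (hf : ConcaveOn ℝ univ f)
    (hb : BddBelow (range f)) : Monotone f := by
  obtain ⟨m, hm⟩ := hb
  intro x y hxy
  by_contra! hyx
  have hxy : x < y := hxy.lt_of_ne (by rintro rfl; exact lt_irrefl _ hyx)
  set s := (f y - f x) / (y - x) with hs
  have hs_neg : s < 0 := div_neg_of_neg_of_pos (by linarith) (by linarith)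
  have hym : m ≤ f y := hm (mem_range_self y)
  -- at `y + t` the secant line through `x` and `y` has dropped below the lower bound `m`
  set t := (f y - m + 1) / -s
  have ht : 0 < t := div_pos (by linarith) (by linarith)
  have hst : s * t = -(f y - m + 1) := by
    rw [mul_div_assoc', div_neg, mul_comm, mul_div_cancel_right₀ _ hs_neg.ne]
  have hslope := hf.slope_anti_adjacent (mem_univ x) (mem_univ (y + t)) hxy (by linarith)
  rw [← hs, add_sub_cancel_left, div_le_iff₀ ht] at hslope
  have hzm : m ≤ f (y + t) := hm (mem_range_self _)
  linarith

theorem ConcaveOn.eq_of_bddBelow {f : ℝ → ℝ} (hf : ConcaveOn ℝ univ f)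
    (hb : BddBelow (range f)) (x y : ℝ) : f x = f y := by
  have hmono := hf.monotone_of_bddBelow hb
  have hmono_neg : Monotone (f ∘ (-LinearMap.id : ℝ →ₗ[ℝ] ℝ)) :=
    (hf.comp_linearMap _).monotone_of_bddBelow (hb.mono (range_comp_subset_range _ f))
  have hanti : Antitone f := fun a b hab => by simpa using hmono_neg (neg_le_neg hab)
  rcases le_total x y with h | h
  · exact le_antisymm (hmono h) (hanti h)
  · exact le_antisymm (hanti h) (hmono h)

theorem nonpos_of_warpedScalarCurvature_nonneg {n a b c s : ℝ} (hn : 2 ≤ n) (ha : 0 < a)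
    (hs : s ≤ 0)
    (h : 0 ≤ a ^ (-2 : ℤ) * s - (n - 1) * (n - 2) * (b / a) ^ 2 - 2 * (n - 1) * (c / a)) :
    c ≤ 0 := by
  have hfiber : a ^ (-2 : ℤ) * s ≤ 0 := mul_nonpos_of_nonneg_of_nonpos (by positivity) hs
  have hwarp : 0 ≤ (n - 1) * (n - 2) * (b / a) ^ 2 :=
    mul_nonneg (mul_nonneg (by linarith) (by linarith)) (sq_nonneg _)
  have hca : c / a ≤ 0 := by nlinarith
  simpa using (div_le_iff₀ ha).mp hca

/-- For the warped product `g = dr² + F'(r)² ḡ` on `ℝ × N^{n-1}` with `F' > 0`,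
whose scalar curvature is
`R = (F')⁻² R̄ − (n−1)(n−2)(F''/F')² − 2(n−1) F'''/F'`, if `R ≥ 0` everywhere
and the fiber scalar curvature satisfies `R̄ ≤ 0` everywhere, then `R ≡ 0`,
`R̄ ≡ 0`, and `F'` is a (positive) constant `c`, so `g` is the Riemannian
product metric `dr² + c² ḡ`. -/
theorem stmt_17 (n : ℕ) (hn : 3 ≤ n) {N : Type*} [Nonempty N]
    (F : ℝ → ℝ) (hF : ContDiff ℝ 2 F)
    (hF''' : ∀ r : ℝ, DifferentiableAt ℝ (deriv (deriv F)) r)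
    (hF' : ∀ r : ℝ, 0 < deriv F r)
    (Rbar : N → ℝ) (R : ℝ × N → ℝ)
    (hR : ∀ r x, R (r, x)
      = (deriv F r) ^ (-2 : ℤ) * Rbar x
        - ((n : ℝ) - 1) * ((n : ℝ) - 2)
          * (deriv (deriv F) r / deriv F r) ^ 2
        - 2 * ((n : ℝ) - 1) * (deriv (deriv (deriv F)) r / deriv F r))
    (hRnonneg : ∀ p, 0 ≤ R p) (hRbarnonpos : ∀ x, Rbar x ≤ 0) :
    (∀ p, R p = 0) ∧ (∀ x, Rbar x = 0) ∧ ∃ c > 0, ∀ r, deriv F r = c := by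
  obtain ⟨x₀⟩ := ‹Nonempty N›
  have hn2 : (2 : ℝ) ≤ n := by exact_mod_cast (by omega : 2 ≤ n)
  have hF'''_nonpos (r : ℝ) : deriv (deriv (deriv F)) r ≤ 0 :=
    nonpos_of_warpedScalarCurvature_nonneg hn2 (hF' r) (hRbarnonpos x₀) (hR r x₀ ▸ hRnonneg _)
  have hconcave : ConcaveOn ℝ univ (deriv F) :=
    concaveOn_univ_of_deriv2_nonpos hF.differentiable_deriv_two hF''' hF'''_nonpos
  obtain ⟨c, hc⟩ : ∃ c, deriv F = fun _ => c :=
    ⟨_, funext fun r => hconcave.eq_of_bddBelow ⟨0, forall_mem_range.2 fun r => (hF' r).le⟩ r 0⟩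
  have hc_pos : 0 < c := by simpa [hc] using hF' 0
  simp only [hc, deriv_const', zero_div, zero_pow two_ne_zero, mul_zero, sub_zero] at hR
  have hRbar (x : N) : Rbar x = 0 :=
    le_antisymm (hRbarnonpos x)
      (nonneg_of_mul_nonneg_right (hR 0 x ▸ hRnonneg _) (zpow_pos hc_pos _))
  refine ⟨fun ⟨r, x⟩ => by rw [hR, hRbar, mul_zero], hRbar, c, hc_pos, fun r => by rw [hc]⟩
end

section
/- Consider the warped product metric g = dr² + F'(r)² ḡ on ℝ × N² over a 2-dimensional fiber (N², ḡ), where F is smooth with F' > 0. Suppose g satisfies the gradient Yamabe soliton equation, i.e. F'' = R − ρ for a constant ρ, where R is the scalar curvature of g. Then the scalar curvature R̄ of (N², ḡ) is constant; hence N² has constant Gauss curvature. -/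
theorem exists_eq_const_of_forall_mul_eq {N : Type*} {u : N → ℝ} {a b : ℝ} (ha : a ≠ 0)
    (h : ∀ x, a * u x = b) : ∃ c, ∀ x, u x = c :=
  ⟨b / a, fun x => by rw [eq_div_iff ha, mul_comm, h]⟩

theorem stmt_18_general {N : Type*}
    (F : ℝ → ℝ)
    (hF' : ∀ r : ℝ, 0 < deriv F r)
    (ρ : ℝ) (Rbar : N → ℝ) (R : ℝ × N → ℝ)
    (hR : ∀ r x, R (r, x)
      = (deriv F r) ^ (-2 : ℤ) * Rbar x
        - 2 * (deriv (deriv F) r / deriv F r) ^ 2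
        - 4 * (deriv (deriv (deriv F)) r / deriv F r))
    (hsoliton : ∀ r x, deriv (deriv F) r = R (r, x) - ρ) :
    ∃ c, ∀ x, Rbar x = c := by
  have hfiber : ∀ x, deriv F 0 ^ (-2 : ℤ) * Rbar x
      = deriv (deriv F) 0 + ρ + 2 * (deriv (deriv F) 0 / deriv F 0) ^ 2
        + 4 * (deriv (deriv (deriv F)) 0 / deriv F 0) :=
    fun x => by linarith [hR 0 x, hsoliton 0 x]
  exact exists_eq_const_of_forall_mul_eq (zpow_ne_zero _ (hF' 0).ne') hfiber

/-- A three-dimensional gradient Yamabe soliton structure on the warped product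
`g = dr² + F'(r)² ḡ` over a two-dimensional fiber `(N², ḡ)`: the scalar
curvature of `g` is `R = (F')⁻² R̄ − 2(F''/F')² − 4 F'''/F'`, and the soliton
equation reduces to `F'' = R − ρ`.  Then the fiber scalar curvature `R̄` is
constant, i.e. `N²` has constant Gauss curvature. -/
theorem stmt_18 {N : Type*}
    (F : ℝ → ℝ) (hF : ContDiff ℝ 2 F)
    (hF''' : ∀ r : ℝ, DifferentiableAt ℝ (deriv (deriv F)) r)
    (hF' : ∀ r : ℝ, 0 < deriv F r)
    (ρ : ℝ) (Rbar : N → ℝ) (R : ℝ × N → ℝ)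
    (hR : ∀ r x, R (r, x)
      = (deriv F r) ^ (-2 : ℤ) * Rbar x
        - 2 * (deriv (deriv F) r / deriv F r) ^ 2
        - 4 * (deriv (deriv (deriv F)) r / deriv F r))
    (hsoliton : ∀ r x, deriv (deriv F) r = R (r, x) - ρ) :
    ∃ c, ∀ x, Rbar x = c :=
  stmt_18_general F hF' ρ Rbar R hR hsoliton
end
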